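/- For all real numbers z, z̃ with 0 < z ≤ z̃ and every natural number n, the ratio of modified Bessel functions satisfies I_n(z)/I_n(z̃) ≤ (z/z̃)^n, where I_n(z) = Σ_{k=0}^∞ (1/(k!(n+k)!)) (z/2)^{n+2k}. -/
import Mathlib


open Real

/-- Modified Bessel function of the first kind of integer order `n`,
defined by its power series. -/
noncomputable def besselI (n : ℕ) (z : ℝ) : ℝ :=
  ∑' k : ℕ, (1 / ((Nat.factorial k : ℝ) * (Nat.factorial (n + k) : ℝ))) * (z / 2) ^ (n + 2 * k)

private lemma aux_summable (n : ℕ) (x : ℝ) :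
    Summable (fun k : ℕ =>
      (1 / ((Nat.factorial k : ℝ) * (Nat.factorial (n + k) : ℝ))) * x ^ (2 * k)) := by
  refine Summable.of_nonneg_of_le (fun k => ?_) (fun k => ?_) (Real.summable_pow_div_factorial (x ^ 2))
  ·
    have : (0:ℝ) ≤ x ^ (2 * k) := by rw [pow_mul]; positivity
    positivity
  · rw [pow_mul, show ((x^2)^k / (Nat.factorial k:ℝ)) = (1/(Nat.factorial k:ℝ)) * (x^2)^k by ring]
    apply mul_le_mul_of_nonneg_right _ (by positivity)
    apply div_le_div_of_nonneg_left one_pos.le (by positivity)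
    have h1 : (1:ℝ) ≤ (Nat.factorial (n + k) : ℝ) := by
      exact_mod_cast Nat.one_le_iff_ne_zero.mpr (Nat.factorial_ne_zero _)
    have h2 : (0:ℝ) < (Nat.factorial k : ℝ) := by exact_mod_cast Nat.factorial_pos k
    nlinarith

private lemma besselI_eq (n : ℕ) (z : ℝ) :
    besselI n z = (z / 2) ^ n *
      ∑' k : ℕ, (1 / ((Nat.factorial k : ℝ) * (Nat.factorial (n + k) : ℝ))) * (z / 2) ^ (2 * k) := by
  rw [besselI, ← tsum_mul_left]
  apply tsum_congr
  intro k
  rw [pow_add]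
  ring

theorem besselI_ratio_le (z ztilde : ℝ) (hz : 0 < z) (hzz : z ≤ ztilde) (n : ℕ) :
    besselI n z / besselI n ztilde ≤ (z / ztilde) ^ n := by
  have hzt : 0 < ztilde := lt_of_lt_of_le hz hzz
  set Sz := ∑' k : ℕ, (1 / ((Nat.factorial k : ℝ) * (Nat.factorial (n + k) : ℝ))) * (z / 2) ^ (2 * k) with hSz
  set St := ∑' k : ℕ, (1 / ((Nat.factorial k : ℝ) * (Nat.factorial (n + k) : ℝ))) * (ztilde / 2) ^ (2 * k) with hSt
  have hle : Sz ≤ St := by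
    apply Summable.tsum_le_tsum _ (aux_summable n (z/2)) (aux_summable n (ztilde/2))
    intro k
    apply mul_le_mul_of_nonneg_left _ (by positivity)
    apply pow_le_pow_left₀ (by positivity)
    linarith
  have hSzpos : 0 < Sz := by
    apply Summable.tsum_pos (aux_summable n (z/2)) _ 0
    · have : (0:ℝ) < (z/2) ^ (2 * 0) := by norm_num
      positivity
    · intro k
      have : (0:ℝ) ≤ (z/2) ^ (2 * k) := by positivity
      positivity
  have hStpos : 0 < St := lt_of_lt_of_le hSzpos hle
  rw [besselI_eq, besselI_eq, ← hSz, ← hSt]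
  have hrw : (z / ztilde) ^ n = (z/2) ^ n / (ztilde/2) ^ n := by
    rw [← div_pow]; congr 1; field_simp
  rw [hrw, div_le_div_iff₀ (by positivity) (by positivity)]
  have h1 : (z/2)^n * Sz * (ztilde/2) ^ n ≤ (z/2)^n * St * (ztilde/2) ^ n := by
    apply mul_le_mul_of_nonneg_right _ (by positivity)
    exact mul_le_mul_of_nonneg_left hle (by positivity)
  calc (z/2)^n * Sz * (ztilde/2) ^ n ≤ (z/2)^n * St * (ztilde/2) ^ n := h1
    _ = (z/2) ^ n * ((ztilde/2)^n * St) := by ring
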